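/- Let N : ℝⁿ → Matrix (Fin n) (Fin n) ℝ be a smooth (1,1)-tensor field whose Nijenhuis torsion vanishes identically. Then for every m ≥ 0, every index i, and every point: Σ_j (N^m)^j_i ∂_j (Tr N) = (1/(m+1)) ∂_i ( Tr(N^{m+1}) ). Equivalently, (ᵗN)^{k−1} d Tr N = d ( Tr(N^k)/k ) for all k ≥ 1. -/

import Mathlib

open Matrix BigOperators

/-- Partial derivative in the `l`-th coordinate direction. -/
noncomputable def pd {n : ℕ} (l : Fin n) (f : (Fin n → ℝ) → ℝ) (x : Fin n → ℝ) : ℝ :=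
  fderiv ℝ f x (Pi.single l 1)

/-- The Nijenhuis torsion of a (1,1)-tensor field `N`, in coordinates. -/
noncomputable def nijenhuisTorsion {n : ℕ}
    (N : (Fin n → ℝ) → Matrix (Fin n) (Fin n) ℝ)
    (k i j : Fin n) (x : Fin n → ℝ) : ℝ :=
  ∑ l, (N x l i * pd l (fun y => N y k j) x
      - N x l j * pd l (fun y => N y k i) x
      - N x k l * (pd i (fun y => N y l j) x - pd j (fun y => N y l i) x))


lemma pd_sum {n : ℕ} {ι : Type*} (s : Finset ι) (f : ι → (Fin n → ℝ) → ℝ)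
    (l : Fin n) (x : Fin n → ℝ) (h : ∀ i ∈ s, DifferentiableAt ℝ (f i) x) :
    pd l (fun y => ∑ i ∈ s, f i y) x = ∑ i ∈ s, pd l (f i) x := by
  unfold pd
  rw [fderiv_fun_sum h]
  simp

lemma pd_mul {n : ℕ} (f g : (Fin n → ℝ) → ℝ) (l : Fin n) (x : Fin n → ℝ)
    (hf : DifferentiableAt ℝ f x) (hg : DifferentiableAt ℝ g x) :
    pd l (fun y => f y * g y) x = f x * pd l g x + g x * pd l f x := by
  unfold pd
  rw [fderiv_fun_mul hf hg]
  simp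

section
variable {n : ℕ} (N : (Fin n → ℝ) → Matrix (Fin n) (Fin n) ℝ)

lemma diff_pow (hN : ∀ i j : Fin n, ContDiff ℝ (⊤ : ℕ∞) (fun x => N x i j))
    (m : ℕ) (a b : Fin n) : Differentiable ℝ (fun x => ((N x) ^ m) a b) := by
  induction m generalizing a b with
  | zero => simp only [pow_zero]; exact differentiable_const _
  | succ m ih =>
    have : (fun x => ((N x) ^ (m+1)) a b) = fun x => ∑ c, ((N x) ^ m) a c * N x c b := by
      funext x; rw [pow_succ, Matrix.mul_apply]
    rw [this]
    exact Differentiable.fun_sum fun c _ => (ih a c).mul ((hN c b).differentiable (by simp))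

lemma pow_entry (m : ℕ) (a b : Fin n) (x : Fin n → ℝ) :
    ((N x) ^ (m+1)) a b = ∑ c, ((N x) ^ m) a c * N x c b := by
  rw [pow_succ, Matrix.mul_apply]

lemma pd_pow_succ (hN : ∀ i j : Fin n, ContDiff ℝ (⊤ : ℕ∞) (fun x => N x i j))
    (m : ℕ) (a b l : Fin n) (x : Fin n → ℝ) :
    pd l (fun y => ((N y) ^ (m+1)) a b) x
      = ∑ c, (((N x) ^ m) a c * pd l (fun y => N y c b) x
            + N x c b * pd l (fun y => ((N y) ^ m) a c) x) := by
  have h1 : (fun y => ((N y) ^ (m+1)) a b) = fun y => ∑ c, ((N y) ^ m) a c * N y c b := by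
    funext y; rw [pow_succ, Matrix.mul_apply]
  rw [h1, pd_sum _ _ _ _ (fun c _ => ((diff_pow N hN m a c).fun_mul
    ((hN c b).differentiable (by simp))).differentiableAt)]
  refine Finset.sum_congr rfl fun c _ => ?_
  rw [pd_mul _ _ _ _ (diff_pow N hN m a c).differentiableAt
    ((hN c b).differentiable (by simp)).differentiableAt]

end

lemma contract1 {n : ℕ} (A B : Matrix (Fin n) (Fin n) ℝ) (f : Fin n → Fin n → ℝ) :
    ∑ a, ∑ c, ∑ d, A a d * f d c * B c a = ∑ c, ∑ d, (B * A) c d * f d c := by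
  rw [Finset.sum_comm]
  refine Finset.sum_congr rfl fun c _ => ?_
  rw [Finset.sum_comm]
  refine Finset.sum_congr rfl fun d _ => ?_
  rw [Matrix.mul_apply, Finset.sum_mul]
  exact Finset.sum_congr rfl fun a _ => by ring

lemma contract2 {n : ℕ} (B C : Matrix (Fin n) (Fin n) ℝ) (g : Fin n → Fin n → ℝ) :
    ∑ a, ∑ c, ∑ d, B d c * g a d * C c a = ∑ a, ∑ d, g a d * (B * C) d a := by
  refine Finset.sum_congr rfl fun a _ => ?_
  rw [Finset.sum_comm]
  refine Finset.sum_congr rfl fun d _ => ?_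
  rw [Matrix.mul_apply, Finset.mul_sum]
  exact Finset.sum_congr rfl fun c _ => by ring

section
variable {n : ℕ} (N : (Fin n → ℝ) → Matrix (Fin n) (Fin n) ℝ)

/-- `Tr(N^m · ∂_l N)` at `x`. -/
noncomputable def Sfun (m : ℕ) (l : Fin n) (x : Fin n → ℝ) : ℝ :=
  ∑ a, ∑ b, ((N x) ^ m) a b * pd l (fun y => N y b a) x

lemma Ulem (hN : ∀ i j : Fin n, ContDiff ℝ (⊤ : ℕ∞) (fun x => N x i j))
    (m : ℕ) : ∀ (p : ℕ) (l : Fin n) (x : Fin n → ℝ),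
    ∑ a, ∑ c, pd l (fun y => ((N y) ^ (m+1)) a c) x * ((N x) ^ p) c a
      = ((m : ℝ) + 1) * Sfun N (m + p) l x := by
  induction m with
  | zero =>
    intro p l x
    simp only [zero_add, pow_one, Nat.cast_zero, zero_add, one_mul]
    unfold Sfun
    rw [Finset.sum_comm]
    refine Finset.sum_congr rfl fun c _ => ?_
    refine Finset.sum_congr rfl fun a _ => ?_
    ring
  | succ m ih =>
    intro p l x
    calc ∑ a, ∑ c, pd l (fun y => ((N y) ^ (m+2)) a c) x * ((N x) ^ p) c a
        = (∑ a, ∑ c, ∑ d, ((N x) ^ (m+1)) a d * pd l (fun y => N y d c) x * ((N x) ^ p) c a)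
        + (∑ a, ∑ c, ∑ d, N x d c * pd l (fun y => ((N y) ^ (m+1)) a d) x * ((N x) ^ p) c a) := by
          simp only [pd_pow_succ N hN (m+1), Finset.sum_mul, add_mul, Finset.sum_add_distrib]
      _ = Sfun N (m + 1 + p) l x + ((m:ℝ)+1) * Sfun N (m + (p+1)) l x := by
          congr 1
          · rw [contract1]
            unfold Sfun
            have hp : (N x) ^ p * (N x) ^ (m+1) = (N x) ^ (m+1+p) := by
              rw [← pow_add]; ring_nf
            rw [hp]
          · rw [contract2]
            have hp : N x * (N x) ^ p = (N x) ^ (p+1) := by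
              rw [← pow_succ']
            rw [hp, ih (p+1) l x]
      _ = (((m:ℕ):ℝ) + 1 + 1) * Sfun N (m + 1 + p) l x := by
          have h2 : m + (p+1) = m + 1 + p := by omega
          rw [h2]; ring
      _ = (((m+1:ℕ):ℝ) + 1) * Sfun N (m + 1 + p) l x := by push_cast; ring

lemma Tlem (hN : ∀ i j : Fin n, ContDiff ℝ (⊤ : ℕ∞) (fun x => N x i j))
    (m : ℕ) (l : Fin n) (x : Fin n → ℝ) :
    pd l (fun y => ∑ a, ((N y) ^ (m+1)) a a) x = ((m : ℝ) + 1) * Sfun N m l x := by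
  have h : ∑ a, ∑ c, pd l (fun y => ((N y) ^ (m+1)) a c) x * ((N x) ^ 0) c a
      = ((m : ℝ) + 1) * Sfun N m l x := Ulem N hN m 0 l x
  rw [pd_sum _ _ _ _ (fun a _ => (diff_pow N hN (m+1) a a).differentiableAt), ← h]
  refine Finset.sum_congr rfl fun a _ => ?_
  simp [Matrix.one_apply]

end

section
variable {n : ℕ} (N : (Fin n → ℝ) → Matrix (Fin n) (Fin n) ℝ)

lemma contract3 (M A : Matrix (Fin n) (Fin n) ℝ) (f : Fin n → Fin n → ℝ) :
    ∑ i, ∑ k, ∑ l, M i k * (A l i * f l k) = ∑ l, ∑ k, (A * M) l k * f l k :=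
  calc ∑ i, ∑ k, ∑ l, M i k * (A l i * f l k)
      = ∑ i, ∑ l, ∑ k, M i k * (A l i * f l k) :=
        Finset.sum_congr rfl fun _ _ => Finset.sum_comm
    _ = ∑ l, ∑ i, ∑ k, M i k * (A l i * f l k) := Finset.sum_comm
    _ = ∑ l, ∑ k, ∑ i, M i k * (A l i * f l k) :=
        Finset.sum_congr rfl fun _ _ => Finset.sum_comm
    _ = ∑ l, ∑ k, (A * M) l k * f l k := by
        refine Finset.sum_congr rfl fun l _ => Finset.sum_congr rfl fun k _ => ?_
        rw [Matrix.mul_apply, Finset.sum_mul]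
        exact Finset.sum_congr rfl fun i _ => by ring

lemma contract4 (M A : Matrix (Fin n) (Fin n) ℝ) (f : Fin n → Fin n → ℝ) :
    ∑ i, ∑ k, ∑ l, M i k * (A k l * f i l) = ∑ i, ∑ l, (M * A) i l * f i l := by
  refine Finset.sum_congr rfl fun i _ => ?_
  rw [Finset.sum_comm]
  refine Finset.sum_congr rfl fun l _ => ?_
  rw [Matrix.mul_apply, Finset.sum_mul]
  exact Finset.sum_congr rfl fun k _ => by ring

lemma Klem (hT : ∀ (k i j : Fin n) (x : Fin n → ℝ), nijenhuisTorsion N k i j x = 0)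
    (m : ℕ) (j : Fin n) (x : Fin n → ℝ) :
    Sfun N (m+1) j x = ∑ l, N x l j * Sfun N m l x := by
  have h0 : (∑ i, ∑ k, ∑ l, ((N x) ^ m) i k * (N x l i * pd l (fun y => N y k j) x))
      - (∑ i, ∑ k, ∑ l, ((N x) ^ m) i k * (N x l j * pd l (fun y => N y k i) x))
      - ((∑ i, ∑ k, ∑ l, ((N x) ^ m) i k * (N x k l * pd i (fun y => N y l j) x))
        - (∑ i, ∑ k, ∑ l, ((N x) ^ m) i k * (N x k l * pd j (fun y => N y l i) x))) = 0 := by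
    have h1 : ∑ i, ∑ k, ((N x) ^ m) i k * nijenhuisTorsion N k i j x = 0 := by
      simp [hT]
    rw [← h1]
    unfold nijenhuisTorsion
    simp only [Finset.mul_sum, mul_sub, Finset.sum_sub_distrib]
  have hA : (∑ i, ∑ k, ∑ l, ((N x) ^ m) i k * (N x l i * pd l (fun y => N y k j) x))
      = ∑ l, ∑ k, ((N x) ^ (m+1)) l k * pd l (fun y => N y k j) x := by
    rw [contract3]
    rw [← pow_succ']
  have hC : (∑ i, ∑ k, ∑ l, ((N x) ^ m) i k * (N x k l * pd i (fun y => N y l j) x))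
      = ∑ l, ∑ k, ((N x) ^ (m+1)) l k * pd l (fun y => N y k j) x := by
    rw [contract4, ← pow_succ]
  have hB : (∑ i, ∑ k, ∑ l, ((N x) ^ m) i k * (N x l j * pd l (fun y => N y k i) x))
      = ∑ l, N x l j * Sfun N m l x := by
    calc ∑ i, ∑ k, ∑ l, ((N x) ^ m) i k * (N x l j * pd l (fun y => N y k i) x)
        = ∑ i, ∑ l, ∑ k, ((N x) ^ m) i k * (N x l j * pd l (fun y => N y k i) x) :=
          Finset.sum_congr rfl fun _ _ => Finset.sum_comm
      _ = ∑ l, ∑ i, ∑ k, ((N x) ^ m) i k * (N x l j * pd l (fun y => N y k i) x) :=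
          Finset.sum_comm
      _ = ∑ l, N x l j * Sfun N m l x := by
          refine Finset.sum_congr rfl fun l _ => ?_
          unfold Sfun
          rw [Finset.mul_sum]
          refine Finset.sum_congr rfl fun i _ => ?_
          rw [Finset.mul_sum]
          exact Finset.sum_congr rfl fun k _ => by ring
  have hD : (∑ i, ∑ k, ∑ l, ((N x) ^ m) i k * (N x k l * pd j (fun y => N y l i) x))
      = Sfun N (m+1) j x := by
    rw [contract4, ← pow_succ]
    unfold Sfun
    rfl
  rw [hA, hB, hC, hD] at h0
  linarith

lemma main_ind (hT : ∀ (k i j : Fin n) (x : Fin n → ℝ), nijenhuisTorsion N k i j x = 0)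
    (m : ℕ) : ∀ (i : Fin n) (x : Fin n → ℝ),
    ∑ j, ((N x) ^ m) j i * Sfun N 0 j x = Sfun N m i x := by
  induction m with
  | zero => intro i x; simp [Matrix.one_apply]
  | succ m ih =>
    intro i x
    calc ∑ j, ((N x) ^ (m+1)) j i * Sfun N 0 j x
        = ∑ j, (∑ k, ((N x) ^ m) j k * N x k i) * Sfun N 0 j x := by
          refine Finset.sum_congr rfl fun jj _ => ?_
          rw [pow_succ, Matrix.mul_apply]
      _ = ∑ k, N x k i * ∑ j, ((N x) ^ m) j k * Sfun N 0 j x := by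
          simp only [Finset.sum_mul]
          rw [Finset.sum_comm]
          simp only [Finset.mul_sum]
          exact Finset.sum_congr rfl fun k _ => Finset.sum_congr rfl fun jj _ => by ring
      _ = ∑ k, N x k i * Sfun N m k x := by
          exact Finset.sum_congr rfl fun k _ => by rw [ih k x]
      _ = Sfun N (m+1) i x := (Klem N hT m i x).symm

end

theorem transpose_N_pow_d_trace
    {n : ℕ} (hn : 1 ≤ n)
    (N : (Fin n → ℝ) → Matrix (Fin n) (Fin n) ℝ)
    (hN : ∀ i j : Fin n, ContDiff ℝ (⊤ : ℕ∞) (fun x => N x i j))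
    (hT : ∀ (k i j : Fin n) (x : Fin n → ℝ), nijenhuisTorsion N k i j x = 0) :
    ∀ (m : ℕ) (i : Fin n) (x : Fin n → ℝ),
      ∑ j, ((N x) ^ m) j i * pd j (fun y => ∑ a, N y a a) x
        = (1 / ((m : ℝ) + 1)) * pd i (fun y => ∑ a, ((N y) ^ (m + 1)) a a) x := by
  intro m i x
  have hS0 : ∀ j : Fin n, pd j (fun y => ∑ a, N y a a) x = Sfun N 0 j x := by
    intro j
    rw [pd_sum _ _ _ _ (fun a _ => ((hN a a).differentiable (by simp)).differentiableAt)]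
    unfold Sfun
    refine (Finset.sum_congr rfl fun a _ => ?_).symm
    simp [Matrix.one_apply]
  have hm : ((m : ℝ) + 1) ≠ 0 := by positivity
  rw [Tlem N hN m i x]
  simp only [hS0]
  rw [main_ind N hT m i x]
  field_simp
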